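/- arXiv:1604.06819 — 4 statements merged into one kernel-verified Lean document; each statement's English description precedes it below -/
import Mathlib

section
/- Let X follow Student's t-distribution with ν > 1 degrees of freedom. Then ν T_1 + M^2 T_{2−ν} is a Stein operator for X: for every smooth compactly supported f : ℝ → ℝ, E[ν (X f'(X) + f(X)) + X^2 (X f'(X) + (2−ν) f(X))] = 0, equivalently E[(ν + X^2) X f'(X) + (ν + (2−ν) X^2) f(X)] = 0. -/
open Real MeasureTheory Set

lemma integral_deriv_zero (F : ℝ → ℝ) (hF : ContDiff ℝ 1 F) (hs : HasCompactSupport F) :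
    ∫ x : ℝ, deriv F x = 0 := by
  have hi : Integrable (deriv F) := by
    exact (hF.continuous_deriv le_rfl).integrable_of_hasCompactSupport hs.deriv
  rw [← intervalIntegral.integral_Iic_add_Ioi (b := 0) hi.integrableOn hi.integrableOn,
    hs.integral_Iic_deriv_eq hF 0, hs.integral_Ioi_deriv_eq hF 0]
  ring

/-- `ν T_1 + M^2 T_{2-ν}` is a Stein operator for Student's t-distribution with `ν > 1`
degrees of freedom. -/
theorem stein_operator_student_t (ν : ℝ) (hν : 1 < ν) (f : ℝ → ℝ)
    (hf : ContDiff ℝ (⊤ : ℕ∞) f) (hsupp : HasCompactSupport f) :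
    ∫ x : ℝ,
        (Real.Gamma ((ν + 1) / 2) / (Real.sqrt (ν * Real.pi) * Real.Gamma (ν / 2)) *
            (1 + x ^ 2 / ν) ^ (-(ν + 1) / 2)) *
          (ν * (x * deriv f x + f x) + x ^ 2 * (x * deriv f x + (2 - ν) * f x)) = 0 := by
  have hν0 : (0:ℝ) < ν := lt_trans one_pos hν
  set C : ℝ := Real.Gamma ((ν + 1) / 2) / (Real.sqrt (ν * Real.pi) * Real.Gamma (ν / 2)) with hC
  set e : ℝ := -(ν + 1) / 2 with he
  set F : ℝ → ℝ := fun x => C * ((1 + x ^ 2 / ν) ^ e * (x * (ν + x ^ 2) * f x)) with hFdef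
  have hpos : ∀ x : ℝ, (0:ℝ) < 1 + x ^ 2 / ν := fun x => by positivity
  have hder : ∀ x : ℝ, HasDerivAt F
      (C * ((1 + x ^ 2 / ν) ^ e *
        (ν * (x * deriv f x + f x) + x ^ 2 * (x * deriv f x + (2 - ν) * f x)))) x := by
    intro x
    have h1 : HasDerivAt (fun x : ℝ => 1 + x ^ 2 / ν) (2 * x / ν) x := by
      simpa using ((hasDerivAt_pow 2 x).div_const ν).const_add 1
    have h2 : HasDerivAt (fun x : ℝ => (1 + x ^ 2 / ν) ^ e)
        (2 * x / ν * e * (1 + x ^ 2 / ν) ^ (e - 1)) x :=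
      h1.rpow_const (Or.inl (hpos x).ne')
    have h3 : HasDerivAt (fun x : ℝ => x * (ν + x ^ 2) * f x)
        ((1 * (ν + x ^ 2) + x * (2 * x)) * f x + x * (ν + x ^ 2) * deriv f x) x := by
      exact ((hasDerivAt_id x).mul (by simpa using (hasDerivAt_pow 2 x).const_add ν)).mul
        ((hf.differentiable (by simp) x).hasDerivAt)
    have := ((h2.mul h3).const_mul C)
    convert this using 1
    case e'_4 => rfl
    case e'_5 => rfl
    case e'_8 => rfl
    have hrw : (1 + x ^ 2 / ν) ^ (e - 1) = (1 + x ^ 2 / ν) ^ e / (1 + x ^ 2 / ν) := by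
      rw [Real.rpow_sub_one (hpos x).ne']
    rw [hrw, he]
    field_simp
    ring
  have hFc : ContDiff ℝ 1 F := by
    rw [contDiff_one_iff_deriv]
    constructor
    · exact fun x => (hder x).differentiableAt
    · have : deriv F = fun x => C * ((1 + x ^ 2 / ν) ^ e *
        (ν * (x * deriv f x + f x) + x ^ 2 * (x * deriv f x + (2 - ν) * f x))) := by
        funext x; exact (hder x).deriv
      rw [this]
      have hcont : Continuous fun x : ℝ => (1 + x ^ 2 / ν) ^ e :=
        Continuous.rpow_const (continuous_const.add ((continuous_pow 2).div_const ν))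
          (fun x => Or.inl (hpos x).ne')
      have h1 := hf.continuous
      have h2 := hf.continuous_deriv (by simp)
      exact continuous_const.mul (hcont.mul (((continuous_const.mul
        ((continuous_id.mul h2).add h1)).add ((continuous_pow 2).mul
        ((continuous_id.mul h2).add (continuous_const.mul h1))))))
  have hFs : HasCompactSupport F := by
    have : F = fun x => (C * ((1 + x ^ 2 / ν) ^ e * (x * (ν + x ^ 2)))) * f x := by
      funext x; simp [hFdef]; ring
    rw [this]
    exact hsupp.mul_left
  have key := integral_deriv_zero F hFc hFs
  rw [show (deriv F) = fun x => C * ((1 + x ^ 2 / ν) ^ e *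
      (ν * (x * deriv f x + f x) + x ^ 2 * (x * deriv f x + (2 - ν) * f x)))
    from funext fun x => (hder x).deriv] at key
  calc ∫ x : ℝ, (C * (1 + x ^ 2 / ν) ^ e) *
          (ν * (x * deriv f x + f x) + x ^ 2 * (x * deriv f x + (2 - ν) * f x))
      = ∫ x : ℝ, C * ((1 + x ^ 2 / ν) ^ e *
          (ν * (x * deriv f x + f x) + x ^ 2 * (x * deriv f x + (2 - ν) * f x))) := by
        congr 1; funext x; ring
    _ = 0 := key
end

section
/- Let X and Y be independent standard normal random variables and let Z = XY. Then E[Z g''(Z) + g'(Z) − Z g(Z)] = 0 for every smooth compactly supported g : ℝ → ℝ; i.e. M D^2 + D − M is a Stein operator for the product of two independent standard normals. -/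
open ProbabilityTheory MeasureTheory Real Filter
open scoped ENNReal NNReal

noncomputable def γ : Measure ℝ := gaussianReal 0 1

lemma pdf_eq (x : ℝ) : gaussianPDFReal 0 1 x = (√(2 * π))⁻¹ * rexp (-x ^ 2 / 2) := by
  simp [gaussianPDFReal]

lemma pdf_cont : Continuous (gaussianPDFReal 0 1) := by
  simp only [funext pdf_eq]
  fun_prop

lemma hasDerivAt_pdf (x : ℝ) :
    HasDerivAt (gaussianPDFReal 0 1) (-x * gaussianPDFReal 0 1 x) x := by
  simp only [funext pdf_eq]
  have h : HasDerivAt (fun x : ℝ => -x ^ 2 / 2) (-x) x := by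
    have := ((hasDerivAt_id x).pow 2).neg.div_const 2
    refine this.congr_deriv ?_
    simp [id]; ring
  have := (h.exp.const_mul ((√(2 * π))⁻¹))
  refine this.congr_deriv ?_
  ring

lemma integral_gauss (f : ℝ → ℝ) :
    ∫ x, f x ∂γ = ∫ x, gaussianPDFReal 0 1 x * f x := by
  rw [γ, gaussianReal_of_var_ne_zero _ one_ne_zero]
  have : ∀ x, gaussianPDF 0 1 x = ((gaussianPDFReal 0 1 x).toNNReal : ℝ≥0∞) := fun x => rfl
  simp only [funext this]
  rw [integral_withDensity_eq_integral_smul ((measurable_gaussianPDFReal 0 1).real_toNNReal) f]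
  congr 1
  ext x
  simp [NNReal.smul_def, Real.coe_toNNReal _ (gaussianPDFReal_nonneg 0 1 x)]

lemma integrable_gauss (f : ℝ → ℝ) (hf : Measurable f) :
    Integrable f γ ↔ Integrable (fun x => gaussianPDFReal 0 1 x * f x) := by
  rw [γ, gaussianReal_of_var_ne_zero _ one_ne_zero]
  have : ∀ x, gaussianPDF 0 1 x = ((gaussianPDFReal 0 1 x).toNNReal : ℝ≥0∞) := fun x => rfl
  simp only [funext this]
  rw [integrable_withDensity_iff_integrable_smul ((measurable_gaussianPDFReal 0 1).real_toNNReal)]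
  constructor <;> intro h <;> [skip; skip] <;>
  · refine h.congr (Filter.Eventually.of_forall fun x => ?_)
    simp [NNReal.smul_def, Real.coe_toNNReal _ (gaussianPDFReal_nonneg 0 1 x)]

lemma stein (f f' : ℝ → ℝ) (hd : ∀ x, HasDerivAt f (f' x) x)
    (hc' : Continuous f') (hs : HasCompactSupport f) :
    ∫ x, x * f x ∂γ = ∫ x, f' x ∂γ := by
  have hcf : Continuous f := continuous_iff_continuousAt.2 fun x => (hd x).continuousAt
  have hs' : HasCompactSupport f' := by
    have h : f' = deriv f := funext fun x => ((hd x).deriv).symm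
    rw [h]; exact hs.deriv
  set φ := gaussianPDFReal 0 1 with hφ
  have hv : ∀ x, HasDerivAt (fun y => -(φ y)) (x * φ x) x := fun x => by
    simpa using (hasDerivAt_pdf x).fun_neg
  have key := integral_mul_deriv_eq_deriv_mul_of_integrable
    (u := f) (v := fun y => -(φ y)) (u' := f') (v' := fun y => y * φ y)
    (fun x _ => hd x) (fun x _ => hv x) ?_ ?_ ?_
  · rw [integral_gauss, integral_gauss]
    calc ∫ x, φ x * (x * f x) = ∫ x, f x * (x * φ x) := by congr 1; ext x; ring
      _ = -∫ x, f' x * -(φ x) := key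
      _ = ∫ x, φ x * f' x := by rw [← integral_neg]; congr 1; ext x; ring
  · exact ((hcf.mul (continuous_id.mul pdf_cont)).integrable_of_hasCompactSupport hs.mul_right)
  · exact ((hc'.mul pdf_cont.neg).integrable_of_hasCompactSupport hs'.mul_right)
  · exact ((hcf.mul pdf_cont.neg).integrable_of_hasCompactSupport hs.mul_right)

lemma integrable_gauss_cs (f : ℝ → ℝ) (hc : Continuous f) (hs : HasCompactSupport f) :
    Integrable f γ :=
  (integrable_gauss f hc.measurable).2
    ((pdf_cont.mul hc).integrable_of_hasCompactSupport hs.mul_left)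

lemma sq_integrable_gauss : Integrable (fun x : ℝ => x ^ 2) γ := by
  refine (integrable_gauss _ (by fun_prop)).2 ?_
  have hmaj : Integrable (fun x : ℝ => ((√(2 * π))⁻¹ * 4) * rexp (-(4⁻¹ : ℝ) * x ^ 2)) :=
    (integrable_exp_neg_mul_sq (by norm_num)).const_mul _
  refine hmaj.mono' (by simp only [funext pdf_eq]; exact (Continuous.aestronglyMeasurable (by fun_prop))) ?_
  refine Filter.Eventually.of_forall fun x => ?_
  have e1 : rexp (-x ^ 2 / 2) = rexp (-x ^ 2 / 4) * rexp (-x ^ 2 / 4) := by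
    rw [← Real.exp_add]; ring_nf
  have e2 : x ^ 2 / 4 ≤ rexp (x ^ 2 / 4) := by
    have := Real.add_one_le_exp (x ^ 2 / 4); linarith
  have e3 : rexp (x ^ 2 / 4) * rexp (-x ^ 2 / 4) = 1 := by
    rw [← Real.exp_add]
    ring_nf
    exact Real.exp_zero
  have e4 : (0:ℝ) < rexp (-x ^ 2 / 4) := Real.exp_pos _
  have e5 : (0:ℝ) < (√(2 * π))⁻¹ := by positivity
  have key : x ^ 2 * rexp (-x ^ 2 / 2) ≤ 4 * rexp (-x ^ 2 / 4) := by
    nlinarith [sq_nonneg x, mul_le_mul_of_nonneg_right e2 e4.le]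
  have e6 : -(4⁻¹ : ℝ) * x ^ 2 = -x ^ 2 / 4 := by ring
  rw [pdf_eq, Real.norm_of_nonneg (by positivity), e6]
  calc (√(2 * π))⁻¹ * rexp (-x ^ 2 / 2) * x ^ 2
      = (√(2 * π))⁻¹ * (x ^ 2 * rexp (-x ^ 2 / 2)) := by ring
    _ ≤ (√(2 * π))⁻¹ * (4 * rexp (-x ^ 2 / 4)) :=
        mul_le_mul_of_nonneg_left key e5.le
    _ = (√(2 * π))⁻¹ * 4 * rexp (-x ^ 2 / 4) := by ring

lemma inner_eq (g : ℝ → ℝ) (hg : ContDiff ℝ (⊤ : ℕ∞) g) (hsupp : HasCompactSupport g)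
    {x : ℝ} (hx : x ≠ 0) :
    ∫ y, ((x * y) * deriv (deriv g) (x * y) + deriv g (x * y) - (x * y) * g (x * y)) ∂γ
      = ∫ y, (y ^ 2 - x ^ 2) * deriv g (x * y) ∂γ := by
  have hg1 : ContDiff ℝ ((⊤ : ℕ∞) : WithTop ℕ∞) g := hg.of_le (by simp)
  have hgd : ContDiff ℝ ((⊤ : ℕ∞) : WithTop ℕ∞) (deriv g) := (contDiff_infty_iff_deriv.mp hg1).2
  have hgdd : ContDiff ℝ ((⊤ : ℕ∞) : WithTop ℕ∞) (deriv (deriv g)) := (contDiff_infty_iff_deriv.mp hgd).2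
  have cg : Continuous g := hg.continuous
  have cdg : Continuous (deriv g) := hgd.continuous
  have cddg : Continuous (deriv (deriv g)) := hgdd.continuous
  have hsdg : HasCompactSupport (deriv g) := hsupp.deriv
  have hsddg : HasCompactSupport (deriv (deriv g)) := hsdg.deriv
  have hcomp : ∀ (ψ : ℝ → ℝ), HasCompactSupport ψ →
      HasCompactSupport (fun y => ψ (x * y)) := fun ψ hψ => by
    have := hψ.comp_homeomorph (Homeomorph.mulLeft₀ x hx)
    simpa [Function.comp_def, Homeomorph.coe_mulLeft₀] using this
  have hder : ∀ (ψ ψ' : ℝ → ℝ), (∀ z, HasDerivAt ψ (ψ' z) z) →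
      ∀ y : ℝ, HasDerivAt (fun y => ψ (x * y)) (x * ψ' (x * y)) y := by
    intro ψ ψ' h y
    have h1 : HasDerivAt (fun y : ℝ => x * y) x y := by
      simpa using (hasDerivAt_id y).const_mul x
    simpa [mul_comm, Function.comp_def] using (h (x * y)).comp y h1
  have hdg_at : ∀ z, HasDerivAt g (deriv g z) z :=
    fun z => ((contDiff_infty_iff_deriv.mp hg1).1 z).hasDerivAt
  have hddg_at : ∀ z, HasDerivAt (deriv g) (deriv (deriv g) z) z :=
    fun z => ((contDiff_infty_iff_deriv.mp hgd).1 z).hasDerivAt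
  -- f₁ and f₂
  have hf₁ : ∀ y : ℝ, HasDerivAt (fun y => y * deriv g (x * y))
      (deriv g (x * y) + (x * y) * deriv (deriv g) (x * y)) y := by
    intro y
    have := (hasDerivAt_id y).mul (hder _ _ hddg_at y)
    refine this.congr_deriv ?_
    simp [id]; ring
  have hf₂ : ∀ y : ℝ, HasDerivAt (fun y => x * g (x * y)) (x ^ 2 * deriv g (x * y)) y := by
    intro y
    have := (hder _ _ hdg_at y).const_mul x
    refine this.congr_deriv ?_
    ring
  have s1 := stein _ _ hf₁
    (cdg.comp (continuous_const.mul continuous_id) |>.add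
      ((continuous_const.mul continuous_id).mul
        (cddg.comp (continuous_const.mul continuous_id))))
    ((hcomp _ hsdg).mul_left)
  have s2 := stein _ _ hf₂
    (continuous_const.mul (cdg.comp (continuous_const.mul continuous_id)))
    ((hcomp _ hsupp).mul_left)
  have ia : Integrable (fun y => deriv g (x * y) + (x * y) * deriv (deriv g) (x * y)) γ := by
    refine integrable_gauss_cs _ (by fun_prop) ?_
    exact ((hcomp _ hsdg).add ((hcomp _ hsddg).mul_left))
  have ib : Integrable (fun y : ℝ => y * (x * g (x * y))) γ :=
    integrable_gauss_cs _ (by fun_prop) ((hcomp _ hsupp).mul_left).mul_left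
  have ic : Integrable (fun y : ℝ => y * (y * deriv g (x * y))) γ :=
    integrable_gauss_cs _ (by fun_prop) ((hcomp _ hsdg).mul_left).mul_left
  have id' : Integrable (fun y : ℝ => x ^ 2 * deriv g (x * y)) γ :=
    integrable_gauss_cs _ (by fun_prop) ((hcomp _ hsdg).mul_left)
  calc ∫ y, ((x * y) * deriv (deriv g) (x * y) + deriv g (x * y) - (x * y) * g (x * y)) ∂γ
      = ∫ y, ((deriv g (x * y) + (x * y) * deriv (deriv g) (x * y))
          - y * (x * g (x * y))) ∂γ := by congr 1; ext y; ring
    _ = (∫ y, (deriv g (x * y) + (x * y) * deriv (deriv g) (x * y)) ∂γ)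
          - ∫ y, y * (x * g (x * y)) ∂γ := integral_sub ia ib
    _ = (∫ y, y * (y * deriv g (x * y)) ∂γ) - ∫ y, x ^ 2 * deriv g (x * y) ∂γ := by
          rw [← s1, s2]
    _ = ∫ y, (y * (y * deriv g (x * y)) - x ^ 2 * deriv g (x * y)) ∂γ :=
          (integral_sub ic id').symm
    _ = ∫ y, (y ^ 2 - x ^ 2) * deriv g (x * y) ∂γ := by congr 1; ext y; ring

/-- `M D^2 + D - M` is a Stein operator for the product of two independent standard
normal random variables. -/
theorem stein_operator_product_normal (g : ℝ → ℝ)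
    (hg : ContDiff ℝ (⊤ : ℕ∞) g) (hsupp : HasCompactSupport g) :
    ∫ q : ℝ × ℝ,
        ((q.1 * q.2) * deriv (deriv g) (q.1 * q.2) + deriv g (q.1 * q.2)
          - (q.1 * q.2) * g (q.1 * q.2))
        ∂((gaussianReal 0 1).prod (gaussianReal 0 1)) = 0 := by
  have hg1 : ContDiff ℝ ((⊤ : ℕ∞) : WithTop ℕ∞) g := hg.of_le (by simp)
  have hgd : ContDiff ℝ ((⊤ : ℕ∞) : WithTop ℕ∞) (deriv g) := (contDiff_infty_iff_deriv.mp hg1).2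
  have cg : Continuous g := hg.continuous
  have cdg : Continuous (deriv g) := hgd.continuous
  have cddg : Continuous (deriv (deriv g)) := (contDiff_infty_iff_deriv.mp hgd).2.continuous
  have hsdg : HasCompactSupport (deriv g) := hsupp.deriv
  have hsddg : HasCompactSupport (deriv (deriv g)) := hsdg.deriv
  haveI : IsProbabilityMeasure γ := inferInstanceAs (IsProbabilityMeasure (gaussianReal 0 1))
  show ∫ q : ℝ × ℝ, ((q.1 * q.2) * deriv (deriv g) (q.1 * q.2) + deriv g (q.1 * q.2)
          - (q.1 * q.2) * g (q.1 * q.2)) ∂(γ.prod γ) = 0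
  -- bounds
  have cH0 : Continuous (fun z : ℝ => z * deriv (deriv g) z + deriv g z - z * g z) := by
    fun_prop
  have hsH0 : HasCompactSupport (fun z : ℝ => z * deriv (deriv g) z + deriv g z - z * g z) := by
    have h := ((hsddg.mul_left (f := fun z : ℝ => z)).add hsdg).add
      ((hsupp.mul_left (f := fun z : ℝ => z)).neg)
    have he : (fun z : ℝ => z * deriv (deriv g) z + deriv g z - z * g z)
        = ((fun z : ℝ => z * deriv (deriv g) z) + deriv g) + -(fun z : ℝ => z * g z) := by
      ext z
      simp [sub_eq_add_neg]
    rw [he]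
    exact h
  obtain ⟨C, hC⟩ := hsH0.exists_bound_of_continuous cH0
  obtain ⟨D, hD⟩ := hsdg.exists_bound_of_continuous cdg
  -- integrability of the integrand on the product space
  have hHint : Integrable (fun q : ℝ × ℝ =>
      (q.1 * q.2) * deriv (deriv g) (q.1 * q.2) + deriv g (q.1 * q.2)
        - (q.1 * q.2) * g (q.1 * q.2)) (γ.prod γ) := by
    refine (integrable_const C).mono'
      ((cH0.comp (continuous_fst.mul continuous_snd)).aestronglyMeasurable) ?_
    exact Filter.Eventually.of_forall fun q => hC (q.1 * q.2)
  -- integrability of coordinate squares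
  have hsq1 : Integrable (fun q : ℝ × ℝ => q.1 ^ 2) (γ.prod γ) := by
    have hmap : (γ.prod γ).map Prod.fst = γ := by
      rw [Measure.map_fst_prod]; simp
    have h1 : Integrable (fun x : ℝ => x ^ 2) ((γ.prod γ).map Prod.fst) := by
      rw [hmap]; exact sq_integrable_gauss
    have := (integrable_map_measure
      (by rw [hmap]; exact sq_integrable_gauss.aestronglyMeasurable)
      measurable_fst.aemeasurable).mp h1
    simpa [Function.comp_def] using this
  have hsq2 : Integrable (fun q : ℝ × ℝ => q.2 ^ 2) (γ.prod γ) := by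
    have hmap : (γ.prod γ).map Prod.snd = γ := by
      rw [Measure.map_snd_prod]; simp
    have h1 : Integrable (fun x : ℝ => x ^ 2) ((γ.prod γ).map Prod.snd) := by
      rw [hmap]; exact sq_integrable_gauss
    have := (integrable_map_measure
      (by rw [hmap]; exact sq_integrable_gauss.aestronglyMeasurable)
      measurable_snd.aemeasurable).mp h1
    simpa [Function.comp_def] using this
  -- integrability of F
  have hFcont : Continuous (fun q : ℝ × ℝ => (q.2 ^ 2 - q.1 ^ 2) * deriv g (q.1 * q.2)) := by
    fun_prop
  have hFint : Integrable (fun q : ℝ × ℝ => (q.2 ^ 2 - q.1 ^ 2) * deriv g (q.1 * q.2))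
      (γ.prod γ) := by
    refine (((hsq1.add hsq2).const_mul D)).mono' hFcont.aestronglyMeasurable ?_
    refine Filter.Eventually.of_forall fun q => ?_
    rw [norm_mul]
    have h1 : ‖q.2 ^ 2 - q.1 ^ 2‖ ≤ q.1 ^ 2 + q.2 ^ 2 := by
      rw [Real.norm_eq_abs]
      have := abs_sub (q.2 ^ 2) (q.1 ^ 2)
      calc |q.2 ^ 2 - q.1 ^ 2| ≤ |q.2 ^ 2| + |q.1 ^ 2| := abs_sub _ _
        _ = q.1 ^ 2 + q.2 ^ 2 := by rw [abs_of_nonneg (sq_nonneg _), abs_of_nonneg (sq_nonneg _)]; ring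
    have h2 : (0:ℝ) ≤ D := le_trans (norm_nonneg _) (hD 0)
    calc ‖q.2 ^ 2 - q.1 ^ 2‖ * ‖deriv g (q.1 * q.2)‖
        ≤ (q.1 ^ 2 + q.2 ^ 2) * D :=
          mul_le_mul h1 (hD _) (norm_nonneg _) (by positivity)
      _ = D * (q.1 ^ 2 + q.2 ^ 2) := by ring
  -- main computation
  rw [integral_prod _ hHint]
  have hx0 : ∀ᵐ x ∂γ, x ≠ 0 := by
    have h0 : γ {0} = 0 :=
      gaussianReal_absolutelyContinuous 0 one_ne_zero (measure_singleton 0)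
    rw [ae_iff]
    convert h0 using 2
    ext x
    simp
  have hcongr : ∫ x, (∫ y, ((x * y) * deriv (deriv g) (x * y) + deriv g (x * y)
        - (x * y) * g (x * y)) ∂γ) ∂γ
      = ∫ x, (∫ y, (y ^ 2 - x ^ 2) * deriv g (x * y) ∂γ) ∂γ := by
    refine integral_congr_ae ?_
    filter_upwards [hx0] with x hx
    exact inner_eq g hg hsupp hx
  rw [hcongr, ← integral_prod _ hFint]
  -- symmetry
  have hswap : ∫ q : ℝ × ℝ, (q.2 ^ 2 - q.1 ^ 2) * deriv g (q.1 * q.2) ∂(γ.prod γ)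
      = ∫ q : ℝ × ℝ, ((Prod.swap q).2 ^ 2 - (Prod.swap q).1 ^ 2)
          * deriv g ((Prod.swap q).1 * (Prod.swap q).2) ∂(γ.prod γ) := by
    conv_lhs => rw [← Measure.prod_swap]
    rw [integral_map measurable_swap.aemeasurable]
    rw [Measure.prod_swap]
    exact hFcont.aestronglyMeasurable
  have hneg : ∀ q : ℝ × ℝ, ((Prod.swap q).2 ^ 2 - (Prod.swap q).1 ^ 2)
      * deriv g ((Prod.swap q).1 * (Prod.swap q).2)
      = -((q.2 ^ 2 - q.1 ^ 2) * deriv g (q.1 * q.2)) := by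
    intro q
    simp only [Prod.swap, Prod.fst, Prod.snd]
    rw [mul_comm q.2 q.1]
    ring
  rw [funext hneg, integral_neg] at hswap
  linarith
end

section
/- Non-existence of a second-order Stein operator with linear coefficients for the product of two independent N(1,1) random variables: there do not exist real constants a, b, c, d, e, f, not all zero, such that E[(aZ + b) g''(Z) + (cZ + d) g'(Z) + (eZ + f) g(Z)] = 0 for every polynomial g, where Z = XY with X, Y independent N(1,1). -/
/-!
Testing the identity on `g = X ^ k` turns it into a linear relation among the moments
`m j = E[Z ^ j]`, `j ≤ k + 1`. Gaussian integration by parts gives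
`E[X ^ (n + 2)] = E[X ^ (n + 1)] + (n + 1) E[X ^ n]` for `X ~ N(1, 1)`, so the moments of `X` are
`1, 1, 2, 4, 10, 26, 76` and, by independence, `m j = E[X ^ j] ^ 2 = 1, 1, 4, 16, 100, 676, 5776`.
For `k = 0, …, 5` the relations form a homogeneous linear system in `(a, …, f)` with invertible
coefficient matrix.
-/

open ProbabilityTheory MeasureTheory Polynomial

namespace ProbabilityTheory

section Gaussian

variable {μ : ℝ} {v : NNReal}

lemma hasDerivAt_gaussianPDFReal (x : ℝ) :
    HasDerivAt (gaussianPDFReal μ v) (-(x - μ) / v * gaussianPDFReal μ v x) x := by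
  have h : HasDerivAt (fun x => -(x - μ) ^ 2 / (2 * v)) (-(2 * (x - μ)) / (2 * v)) x := by
    simpa using (((hasDerivAt_id x).sub_const μ).pow 2).neg.div_const (2 * (v : ℝ))
  rw [gaussianPDFReal_def]
  exact (h.exp.const_mul _).congr_deriv (by ring)

lemma integrable_mul_gaussianPDFReal_iff {f : ℝ → ℝ} (hv : v ≠ 0) :
    Integrable (fun x => f x * gaussianPDFReal μ v x) ↔ Integrable f (gaussianReal μ v) := by
  rw [gaussianReal_of_var_ne_zero _ hv, integrable_withDensity_iff (measurable_gaussianPDF _ _)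
    (ae_of_all _ fun _ => gaussianPDF_lt_top)]
  simp

lemma integrable_pow_gaussianReal (n : ℕ) : Integrable (fun x => x ^ n) (gaussianReal μ v) :=
  integrable_pow_of_mem_interior_integrableExpSet (X := id) (by simp) n

lemma integral_sub_mul_pow_gaussianReal (n : ℕ) :
    ∫ x, (x - μ) * x ^ (n + 1) ∂gaussianReal μ v = v * (n + 1) * ∫ x, x ^ n ∂gaussianReal μ v := by
  rcases eq_or_ne v 0 with rfl | hv
  · simp [gaussianReal_zero_var]
  have hpow (k : ℕ) : Integrable (fun x => x ^ k * gaussianPDFReal μ v x) :=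
    (integrable_mul_gaussianPDFReal_iff hv).2 (integrable_pow_gaussianReal k)
  have hparts := integral_mul_deriv_eq_deriv_mul_of_integrable (u := fun x => x ^ (n + 1))
    (u' := fun x => (n + 1) * x ^ n) (v' := fun x => -(x - μ) / v * gaussianPDFReal μ v x)
    (fun x _ => by simpa using hasDerivAt_pow (n + 1) x) (fun x _ => hasDerivAt_gaussianPDFReal x)
    ?_ ?_ (hpow (n + 1))
  · simp_rw [integral_gaussianReal_eq_integral_smul hv, smul_eq_mul]
    have hv' : (v : ℝ) ≠ 0 := by exact_mod_cast hv
    calc ∫ x, gaussianPDFReal μ v x * ((x - μ) * x ^ (n + 1))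
        = -v * ∫ x, x ^ (n + 1) * (-(x - μ) / v * gaussianPDFReal μ v x) := by
          rw [← integral_const_mul]; congr 1 with x; field_simp
      _ = v * (n + 1) * ∫ x, gaussianPDFReal μ v x * x ^ n := by
          rw [hparts, neg_mul_neg, ← integral_const_mul, ← integral_const_mul]
          congr 1 with x; ring
  · refine (((hpow (n + 2)).const_mul (-1 / v)).add ((hpow (n + 1)).const_mul (μ / v))).congr
      (.of_forall fun x => ?_)
    simp only [Pi.add_apply, Pi.mul_apply]; ring
  · exact ((hpow n).const_mul (n + 1)).congr (.of_forall fun x => by simp only [Pi.mul_apply]; ring)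

lemma moment_id_add_two_gaussianReal (n : ℕ) :
    moment id (n + 2) (gaussianReal μ v) =
      μ * moment id (n + 1) (gaussianReal μ v) + v * (n + 1) * moment id n (gaussianReal μ v) := by
  have hpow := integrable_pow_gaussianReal (μ := μ) (v := v)
  simp only [moment_def, Pi.pow_apply, id]
  rw [← integral_sub_mul_pow_gaussianReal]
  calc ∫ x, x ^ (n + 2) ∂gaussianReal μ v
      = μ * ∫ x, x ^ (n + 1) ∂gaussianReal μ v
        + ∫ x, (x ^ (n + 2) - μ * x ^ (n + 1)) ∂gaussianReal μ v := by
        rw [integral_sub (by fun_prop) (by fun_prop), integral_const_mul]; ring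
    _ = _ := by congr 2 with x; ring

end Gaussian

lemma moment_fst_mul_snd_prod {μ ν : Measure ℝ} [SFinite μ] [SFinite ν] (n : ℕ) :
    moment (fun q : ℝ × ℝ => q.1 * q.2) n (μ.prod ν) = moment id n μ * moment id n ν := by
  simp only [moment_def, Pi.pow_apply, id, mul_pow]
  exact integral_prod_mul (fun x => x ^ n) (fun y => y ^ n)

section SteinOperator

variable {Ω : Type*} [MeasurableSpace Ω] {P : Measure Ω} {Z : Ω → ℝ}

/-- For `k < 2` the truncated exponents `k - 2` and `k - 1` only occur with a zero coefficient. -/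
lemma integral_stein_X_pow (hZ : ∀ n, Integrable (fun ω => Z ω ^ n) P) (a b c d e f : ℝ) (k : ℕ) :
    ∫ ω, ((a * Z ω + b) * (derivative (derivative (X ^ k))).eval (Z ω)
      + (c * Z ω + d) * (derivative (X ^ k)).eval (Z ω) + (e * Z ω + f) * (X ^ k).eval (Z ω)) ∂P
    = k * (k - 1 : ℕ) * (a * moment Z (k - 2 + 1) P + b * moment Z (k - 2) P)
      + k * (c * moment Z (k - 1 + 1) P + d * moment Z (k - 1) P)
      + e * moment Z (k + 1) P + f * moment Z k P := by
  simp only [derivative_X_pow, derivative_C_mul, eval_mul, eval_C, eval_pow, eval_X, moment_def,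
    Pi.pow_apply, Nat.sub_sub]
  calc _ = ∫ ω, (k * (k - 1 : ℕ) * a * Z ω ^ (k - 2 + 1) + k * (k - 1 : ℕ) * b * Z ω ^ (k - 2)
          + (k * c * Z ω ^ (k - 1 + 1) + k * d * Z ω ^ (k - 1))
          + (e * Z ω ^ (k + 1) + f * Z ω ^ k)) ∂P := by
        congr 1 with ω; push_cast; ring
    _ = _ := by
        simp (disch := fun_prop) only [integral_add, integral_const_mul]
        ring

end SteinOperator

end ProbabilityTheory

/-- There is no (nonzero) second order Stein operator with linear coefficients,
acting on polynomials, for the product of two independent `N(1,1)` random variables. -/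
theorem no_second_order_linear_stein_operator :
    ¬ ∃ a b c d e f : ℝ,
      ¬ (a = 0 ∧ b = 0 ∧ c = 0 ∧ d = 0 ∧ e = 0 ∧ f = 0) ∧
      ∀ g : Polynomial ℝ,
        ∫ q : ℝ × ℝ,
            ((a * (q.1 * q.2) + b) * (derivative (derivative g)).eval (q.1 * q.2)
              + (c * (q.1 * q.2) + d) * (derivative g).eval (q.1 * q.2)
              + (e * (q.1 * q.2) + f) * g.eval (q.1 * q.2))
            ∂((gaussianReal 1 1).prod (gaussianReal 1 1)) = 0 := by
  rintro ⟨a, b, c, d, e, f, hne, hstein⟩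
  have hZ (n : ℕ) : Integrable (fun q : ℝ × ℝ => (q.1 * q.2) ^ n)
      ((gaussianReal 1 1).prod (gaussianReal 1 1)) := by
    simpa only [mul_pow] using
      (integrable_pow_gaussianReal n).mul_prod (integrable_pow_gaussianReal n)
  have hm0 : moment id 0 (gaussianReal 1 1) = 1 := by simp [moment_def]
  have hm1 : moment id 1 (gaussianReal 1 1) = 1 := by simp [moment_def]
  have hX_pow (k : ℕ) := (integral_stein_X_pow hZ a b c d e f k).symm.trans (hstein (X ^ k))
  have h0 := hX_pow 0
  have h1 := hX_pow 1
  have h2 := hX_pow 2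
  have h3 := hX_pow 3
  have h4 := hX_pow 4
  have h5 := hX_pow 5
  norm_num [moment_fst_mul_snd_prod, moment_id_add_two_gaussianReal, hm0, hm1] at h0 h1 h2 h3 h4 h5
  exact hne ⟨by linarith, by linarith, by linarith, by linarith, by linarith, by linarith⟩
end

section
/- If X follows a Beta(a, b) distribution on (0, 1) with a, b > 0, then the reciprocal operator identity holds: for every smooth compactly supported f : ℝ → ℝ (test functions for 1/X), E[T_{1−a−b} f(1/X) − (1/X) T_{1−a} f(1/X)] = 0, i.e. T_{1−a−b} − M T_{1−a} is a Stein operator for 1/X. -/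
open MeasureTheory Real

/-- `T_{1-a-b} - M T_{1-a}` is a Stein operator for the reciprocal `1/X` of a
`Beta(a, b)` random variable. -/
theorem stein_operator_inverse_beta (a b : ℝ) (ha : 0 < a) (hb : 0 < b) (f : ℝ → ℝ)
    (hf : ContDiff ℝ (⊤ : ℕ∞) f) (hsupp : HasCompactSupport f)
    (hsuppPos : tsupport f ⊆ Set.Ioi (0 : ℝ)) :
    ∫ x in Set.Ioo (0 : ℝ) 1,
        (x ^ (a - 1) * (1 - x) ^ (b - 1) *
            (Real.Gamma (a + b) / (Real.Gamma a * Real.Gamma b))) *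
          ((x⁻¹ * deriv f x⁻¹ + (1 - a - b) * f x⁻¹)
            - x⁻¹ * (x⁻¹ * deriv f x⁻¹ + (1 - a) * f x⁻¹)) = 0 := by
  set C : ℝ := Real.Gamma (a + b) / (Real.Gamma a * Real.Gamma b) with hC
  set g : ℝ → ℝ := fun x =>
      (x ^ (a - 1) * (1 - x) ^ (b - 1) * C) *
        ((x⁻¹ * deriv f x⁻¹ + (1 - a - b) * f x⁻¹)
          - x⁻¹ * (x⁻¹ * deriv f x⁻¹ + (1 - a) * f x⁻¹)) with hg
  -- bound for the support of f
  obtain ⟨R₀, hR₀⟩ := (hsupp.isCompact).bddAbove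
  set R : ℝ := max R₀ 1 with hR
  have hRpos : (0 : ℝ) < R := lt_of_lt_of_le one_pos (le_max_right _ _)
  set c : ℝ := (R + 1)⁻¹ with hc
  have hc0 : (0 : ℝ) < c := by positivity
  have hc1 : c < 1 := by
    rw [hc]
    rw [inv_lt_one_iff₀]
    right; linarith
  -- f and deriv f vanish at points > R
  have hfz : ∀ y : ℝ, R < y → f y = 0 := by
    intro y hy
    apply image_eq_zero_of_notMem_tsupport
    intro hmem
    exact absurd (hR₀ hmem) (by push_cast; nlinarith [le_max_left R₀ (1:ℝ)])
  have hfz' : ∀ y : ℝ, R < y → deriv f y = 0 := by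
    intro y hy
    by_contra h
    have : y ∈ tsupport f := support_deriv_subset (by simpa using h)
    exact absurd (hR₀ this) (by nlinarith [le_max_left R₀ (1:ℝ)])
  -- g vanishes on (0, c]
  have hgz : ∀ x : ℝ, 0 < x → x ≤ c → g x = 0 := by
    intro x hx hxc
    have hxinv : R < x⁻¹ := by
      have h1 : (R + 1 : ℝ) ≤ x⁻¹ := by
        rw [hc] at hxc
        calc (R + 1 : ℝ) = ((R+1)⁻¹)⁻¹ := by rw [inv_inv]
        _ ≤ x⁻¹ := by
            apply inv_anti₀ hx hxc
      linarith
    simp [hg, hfz _ hxinv, hfz' _ hxinv]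
  -- the antiderivative
  set F : ℝ → ℝ := fun x => C * (x ^ (a - 1) * (1 - x) ^ b * f x⁻¹) with hFdef
  have hdf : Differentiable ℝ f := hf.differentiable (by simp)
  have hcderiv : Continuous (deriv f) := hf.continuous_deriv (by simp)
  -- derivative of F equals g on (c, 1)
  have hF : ∀ x ∈ Set.Ioo c 1, HasDerivAt F (g x) x := by
    intro x hx
    have hx0 : (0 : ℝ) < x := lt_trans hc0 hx.1
    have hx0' : x ≠ 0 := ne_of_gt hx0
    have h1x : (0 : ℝ) < 1 - x := by linarith [hx.2]
    have h1x' : (1 : ℝ) - x ≠ 0 := ne_of_gt h1x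
    have hA : HasDerivAt (fun y : ℝ => y ^ (a - 1)) ((a - 1) * x ^ (a - 1 - 1)) x :=
      Real.hasDerivAt_rpow_const (Or.inl hx0')
    have hB : HasDerivAt (fun y : ℝ => (1 - y) ^ b) (-(b * (1 - x) ^ (b - 1))) x := by
      have h1 : HasDerivAt (fun y : ℝ => (1 - y)) (-1) x := by
        simpa using (hasDerivAt_id x).const_sub 1
      have h2 : HasDerivAt (fun t : ℝ => t ^ b) (b * (1 - x) ^ (b - 1)) (1 - x) :=
        Real.hasDerivAt_rpow_const (Or.inl h1x')
      have := h2.comp x h1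
      simpa [mul_comm, Function.comp_def] using this
    have hfi : HasDerivAt (fun y : ℝ => f y⁻¹) (deriv f x⁻¹ * (-(x ^ 2)⁻¹)) x := by
      have h1 : HasDerivAt (fun y : ℝ => y⁻¹) (-(x ^ 2)⁻¹) x := hasDerivAt_inv hx0'
      exact ((hdf x⁻¹).hasDerivAt).comp x h1
    have hprod := ((hA.mul hB).mul hfi).const_mul C
    refine hprod.congr_deriv ?_; symm; simp only [Pi.mul_apply]
    rw [hg]
    have e1 : x ^ (a - 1 - 1) = x ^ (a - 1) * x⁻¹ := by
      rw [Real.rpow_sub_one hx0', div_eq_mul_inv]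
    have e2 : (1 - x) ^ b = (1 - x) ^ (b - 1) * (1 - x) := by
      rw [Real.rpow_sub_one h1x', div_mul_cancel₀]
      exact h1x'
    rw [e1, e2]
    have hxx : x * x⁻¹ = 1 := mul_inv_cancel₀ hx0'
    have hsq : (x ^ 2)⁻¹ = x⁻¹ * x⁻¹ := by
      rw [sq, mul_inv]
    rw [hsq]
    field_simp
    ring
  -- continuity of F on [c,1]
  have hFcont : ContinuousOn F (Set.Icc c 1) := by
    apply ContinuousOn.mul continuousOn_const
    apply ContinuousOn.mul
    apply ContinuousOn.mul
    · exact ContinuousOn.rpow_const continuousOn_id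
        (fun x hx => Or.inl (ne_of_gt (lt_of_lt_of_le hc0 hx.1)))
    · exact ContinuousOn.rpow_const (continuousOn_const.sub continuousOn_id)
        (fun x hx => Or.inr hb.le)
    · exact hf.continuous.comp_continuousOn
        (continuousOn_id.inv₀ (fun x hx => ne_of_gt (lt_of_lt_of_le hc0 hx.1)))
  -- interval integrability of g on [c,1]
  have hint : IntervalIntegrable g volume c 1 := by
    have hbase : IntervalIntegrable (fun x : ℝ => (1 - x) ^ (b - 1)) volume c 1 := by
      have h0 : IntervalIntegrable (fun t : ℝ => t ^ (b - 1)) volume (1 - c) (1 - 1) :=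
        intervalIntegral.intervalIntegrable_rpow' (by linarith)
      have := h0.comp_sub_left 1
      simpa using this
    have hcontrest : ContinuousOn (fun x : ℝ =>
        (x ^ (a - 1) * C) * ((x⁻¹ * deriv f x⁻¹ + (1 - a - b) * f x⁻¹)
          - x⁻¹ * (x⁻¹ * deriv f x⁻¹ + (1 - a) * f x⁻¹))) (Set.uIcc c 1) := by
      rw [Set.uIcc_of_le hc1.le]
      have hne : ∀ x ∈ Set.Icc c 1, x ≠ 0 :=
        fun x hx => ne_of_gt (lt_of_lt_of_le hc0 hx.1)
      have hinv : ContinuousOn (fun x : ℝ => x⁻¹) (Set.Icc c 1) :=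
        continuousOn_id.inv₀ hne
      have hfc : ContinuousOn (fun x : ℝ => f x⁻¹) (Set.Icc c 1) :=
        hf.continuous.comp_continuousOn hinv
      have hdc : ContinuousOn (fun x : ℝ => deriv f x⁻¹) (Set.Icc c 1) :=
        hcderiv.comp_continuousOn hinv
      apply ContinuousOn.mul
      · exact (ContinuousOn.rpow_const continuousOn_id
          (fun x hx => Or.inl (hne x hx))).mul continuousOn_const
      · exact ((hinv.mul hdc).add (continuousOn_const.mul hfc)).sub
          (hinv.mul ((hinv.mul hdc).add (continuousOn_const.mul hfc)))
    have := hbase.mul_continuousOn hcontrest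
    apply this.congr
    intro x _
    simp only [hg]
    ring
  -- reduce set integral over (0,1) to interval integral over [c,1]
  have hsplit : (∫ x in Set.Ioo (0 : ℝ) 1, g x) = ∫ x in Set.Ioc c 1, g x := by
    rw [← integral_indicator measurableSet_Ioo, ← integral_indicator measurableSet_Ioc]
    apply integral_congr_ae
    filter_upwards [compl_mem_ae_iff.mpr (measure_singleton (1 : ℝ))] with x hx1
    simp only [Set.mem_compl_iff, Set.mem_singleton_iff] at hx1
    by_cases h1 : x ∈ Set.Ioo (0 : ℝ) 1
    · by_cases h2 : x ∈ Set.Ioc c 1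
      · rw [Set.indicator_of_mem h1, Set.indicator_of_mem h2]
      · rw [Set.indicator_of_mem h1, Set.indicator_of_notMem h2]
        have hxc : x ≤ c := by
          by_contra hcon
          exact h2 ⟨lt_of_not_ge hcon, h1.2.le⟩
        exact hgz x h1.1 hxc
    · by_cases h2 : x ∈ Set.Ioc c 1
      · exfalso
        exact h1 ⟨lt_trans hc0 h2.1, lt_of_le_of_ne h2.2 hx1⟩
      · rw [Set.indicator_of_notMem h1, Set.indicator_of_notMem h2]
  have hFTC : (∫ x in c..1, g x) = F 1 - F c :=
    intervalIntegral.integral_eq_sub_of_hasDeriv_right_of_le hc1.le hFcont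
      (fun x hx => (hF x hx).hasDerivWithinAt) hint
  have hF1 : F 1 = 0 := by
    simp [hFdef, Real.zero_rpow (ne_of_gt hb)]
  have hFc : F c = 0 := by
    have : f c⁻¹ = 0 := by
      apply hfz
      rw [hc, inv_inv]
      linarith
    simp [hFdef, this]
  have : (∫ x in Set.Ioo (0 : ℝ) 1, g x) = 0 := by
    rw [hsplit, ← intervalIntegral.integral_of_le hc1.le, hFTC, hF1, hFc, sub_zero]
  exact this
end
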